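/- arXiv:2511.00717 — 2 statements merged into one kernel-verified Lean document; each statement's English description precedes it below -/
import Mathlib

section
/- Let ℙ be an atomless probability measure and Y ≥ 0 with E^ℙ[Y] > 1, and 𝓟(ℙ,0,Y) = {ℚ ≪ ℙ : dℚ/dℙ ≤ Y}. Then for every A ∈ 𝓕, sup_{ℚ ∈ 𝓟(ℙ,0,Y)} ℚ(A) = min(1, E^ℙ[Y·1_A]). -/
/-!
An admissible `Q` satisfies `Q(A) = ∫_A dQ/dℙ ≤ ∫_A Y` and `Q(A) ≤ 1`. The bound is attained by
the density `f = a Y` on `A` and `f = b Y` off `A`, with weights `a, b ∈ [0, 1]` such that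
`∫ f = 1` and `a ∫_A Y = min 1 (∫_A Y)`: either `a = (∫_A Y)⁻¹, b = 0`, or `a = 1` and `b` spreads
the missing mass `1 - ∫_A Y` over `Aᶜ`, which is possible because `E[Y] ≥ 1`.
-/

open Set MeasureTheory

/-- For `x ∉ S` the inner supremum is over an empty type, so it takes the junk value `0`. -/
lemma Real.biSup_eq_of_isGreatest {α : Type*} {S : Set α} {g : α → ℝ} {m : ℝ}
    (h : IsGreatest (g '' S) m) (hm : 0 ≤ m) : ⨆ x ∈ S, g x = m := by
  obtain ⟨⟨x₀, hx₀, rfl⟩, hle⟩ := h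
  have : Nonempty α := ⟨x₀⟩
  have hbound (x : α) : ⨆ _ : x ∈ S, g x ≤ g x₀ := by
    by_cases hx : x ∈ S
    · rw [ciSup_pos hx]
      exact hle (mem_image_of_mem g hx)
    · simpa [hx] using hm
  exact ciSup_eq_of_forall_le_of_forall_lt_exists_gt hbound
    fun w hw => ⟨x₀, by rwa [ciSup_pos hx₀]⟩

lemma exists_weights_of_one_le_add {I J : ℝ} (hIJ : 1 ≤ I + J) :
    ∃ a b : ℝ, a ∈ Icc (0 : ℝ) 1 ∧ b ∈ Icc (0 : ℝ) 1 ∧ a * I + b * J = 1 ∧ a * I = min 1 I := by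
  rcases le_or_gt 1 I with h1 | h1
  · refine ⟨I⁻¹, 0, ⟨by positivity, inv_le_one_of_one_le₀ h1⟩, ⟨le_rfl, zero_le_one⟩, ?_, ?_⟩
    · rw [inv_mul_cancel₀ (by positivity), zero_mul, add_zero]
    · rw [inv_mul_cancel₀ (by positivity), min_eq_left h1]
  · have hJ : 0 < J := by linarith
    refine ⟨1, (1 - I) / J, ⟨zero_le_one, le_rfl⟩,
      ⟨div_nonneg (by linarith) hJ.le, (div_le_one hJ).2 (by linarith)⟩, ?_, ?_⟩
    · rw [div_mul_cancel₀ _ hJ.ne']; ring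
    · rw [one_mul, min_eq_right h1.le]

namespace MeasureTheory

variable {Ω : Type*} [MeasurableSpace Ω] {μ : Measure Ω}

section WithDensity

variable {f : Ω → ℝ}

lemma toReal_withDensity_ofReal_apply (hf : Integrable f μ) (hf0 : 0 ≤ᵐ[μ] f) {s : Set Ω}
    (hs : MeasurableSet s) :
    (μ.withDensity (fun ω => ENNReal.ofReal (f ω)) s).toReal = ∫ ω in s, f ω ∂μ := by
  rw [withDensity_apply _ hs, ← ofReal_integral_eq_lintegral_ofReal hf.restrict
    (ae_restrict_of_ae hf0), ENNReal.toReal_ofReal (integral_nonneg_of_ae (ae_restrict_of_ae hf0))]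

lemma isProbabilityMeasure_withDensity_ofReal (hf : Integrable f μ) (hf0 : 0 ≤ᵐ[μ] f)
    (hf1 : ∫ ω, f ω ∂μ = 1) :
    IsProbabilityMeasure (μ.withDensity fun ω => ENNReal.ofReal (f ω)) := by
  constructor
  rw [withDensity_apply _ MeasurableSet.univ, Measure.restrict_univ,
    ← ofReal_integral_eq_lintegral_ofReal hf hf0, hf1, ENNReal.ofReal_one]

lemma toReal_rnDeriv_withDensity_ofReal [SigmaFinite μ] (hf : AEMeasurable f μ)
    (hf0 : 0 ≤ᵐ[μ] f) :
    ∀ᵐ ω ∂μ, ((μ.withDensity fun ω => ENNReal.ofReal (f ω)).rnDeriv μ ω).toReal = f ω := by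
  filter_upwards [Measure.rnDeriv_withDensity₀ μ hf.ennreal_ofReal, hf0] with ω hω hω0
  rw [hω, ENNReal.toReal_ofReal hω0]

end WithDensity

variable {Y : Ω → ℝ}

lemma toReal_le_setIntegral_of_rnDeriv_le [SigmaFinite μ] {Q : Measure Ω} [IsFiniteMeasure Q]
    (hQμ : Q ≪ μ) (hQY : ∀ᵐ ω ∂μ, (Q.rnDeriv μ ω).toReal ≤ Y ω) {s : Set Ω}
    (hY : IntegrableOn Y s μ) : (Q s).toReal ≤ ∫ ω in s, Y ω ∂μ := by
  rw [← measureReal_def, ← Measure.setIntegral_toReal_rnDeriv hQμ s]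
  exact integral_mono_ae Measure.integrable_toReal_rnDeriv.restrict hY (ae_restrict_of_ae hQY)

lemma exists_density_le_setIntegral_eq_min (hY : Integrable Y μ) (hY0 : ∀ ω, 0 ≤ Y ω)
    (hEY : 1 ≤ ∫ ω, Y ω ∂μ) {A : Set Ω} (hA : MeasurableSet A) :
    ∃ f : Ω → ℝ, Integrable f μ ∧ (∀ ω, 0 ≤ f ω ∧ f ω ≤ Y ω) ∧ ∫ ω, f ω ∂μ = 1 ∧
      ∫ ω in A, f ω ∂μ = min 1 (∫ ω in A, Y ω ∂μ) := by
  classical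
  obtain ⟨a, b, ⟨ha0, ha1⟩, ⟨hb0, hb1⟩, htotal, hA_eq⟩ :=
    exists_weights_of_one_le_add (by rwa [integral_add_compl hA hY])
  have hscale {c : ℝ} (hc0 : 0 ≤ c) (hc1 : c ≤ 1) (ω : Ω) : 0 ≤ c * Y ω ∧ c * Y ω ≤ Y ω :=
    ⟨mul_nonneg hc0 (hY0 ω), mul_le_of_le_one_left (hY0 ω) hc1⟩
  have hfA : ∫ ω in A, A.piecewise (fun ω => a * Y ω) (fun ω => b * Y ω) ω ∂μ =
      a * ∫ ω in A, Y ω ∂μ := by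
    rw [setIntegral_congr_fun hA (piecewise_eqOn _ _ _), integral_const_mul]
  refine ⟨A.piecewise (fun ω => a * Y ω) (fun ω => b * Y ω),
    Integrable.piecewise hA (hY.const_mul a).integrableOn (hY.const_mul b).integrableOn,
    fun ω => ?_, ?_, ?_⟩
  · by_cases hω : ω ∈ A
    · simpa [hω] using hscale ha0 ha1 ω
    · simpa [hω] using hscale hb0 hb1 ω
  · rw [integral_piecewise hA (hY.const_mul a).integrableOn (hY.const_mul b).integrableOn,
      integral_const_mul, integral_const_mul, htotal]
  · rw [hfA, hA_eq]

end MeasureTheory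

theorem stmt_14_general {Ω : Type*} [MeasurableSpace Ω] (ℙ : Measure Ω)
    [IsProbabilityMeasure ℙ]
    (Y : Ω → ℝ) (hYpos : ∀ ω, 0 ≤ Y ω)
    (hYint : Integrable Y ℙ) (hEY : 1 < ∫ ω, Y ω ∂ℙ)
    (A : Set Ω) (hA : MeasurableSet A) :
    (⨆ Q ∈ {Q : Measure Ω | IsProbabilityMeasure Q ∧ Q ≪ ℙ ∧
        ∀ᵐ ω ∂ℙ, (Q.rnDeriv ℙ ω).toReal ≤ Y ω},
      (Q A).toReal) = min 1 (∫ ω in A, Y ω ∂ℙ) := by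
  obtain ⟨f, hf, hfY, hf1, hfA⟩ :=
    exists_density_le_setIntegral_eq_min hYint hYpos hEY.le hA
  have hf0 : 0 ≤ᵐ[ℙ] f := ae_of_all _ fun ω => (hfY ω).1
  have hQ₀ := isProbabilityMeasure_withDensity_ofReal hf hf0 hf1
  refine Real.biSup_eq_of_isGreatest ⟨⟨_, ⟨hQ₀, withDensity_absolutelyContinuous _ _, ?_⟩,
    (toReal_withDensity_ofReal_apply hf hf0 hA).trans hfA⟩, ?_⟩ ?_
  · filter_upwards [toReal_rnDeriv_withDensity_ofReal hf.aemeasurable hf0] with ω hω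
    exact hω ▸ (hfY ω).2
  · rintro _ ⟨Q, ⟨hQ, hQℙ, hQY⟩, rfl⟩
    exact le_min (ENNReal.toReal_le_of_le_ofReal zero_le_one (by simpa using prob_le_one))
      (toReal_le_setIntegral_of_rnDeriv_le hQℙ hQY hYint.integrableOn)
  · exact le_min zero_le_one (setIntegral_nonneg hA fun ω _ => hYpos ω)

/-- Worst-case probability of an event under the likelihood-ratio constraint
`dQ/dℙ ≤ Y`: `sup_{Q ∈ 𝓟(ℙ,0,Y)} Q(A) = min(1, E^ℙ[Y 1_A])`. -/
theorem stmt_14 {Ω : Type*} [MeasurableSpace Ω] (ℙ : Measure Ω)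
    [IsProbabilityMeasure ℙ] [NullSingletonClass ℙ]
    (Y : Ω → ℝ) (hYmeas : Measurable Y) (hYpos : ∀ ω, 0 ≤ Y ω)
    (hYint : Integrable Y ℙ) (hEY : 1 < ∫ ω, Y ω ∂ℙ)
    (A : Set Ω) (hA : MeasurableSet A) :
    (⨆ Q ∈ {Q : Measure Ω | IsProbabilityMeasure Q ∧ Q ≪ ℙ ∧
        ∀ᵐ ω ∂ℙ, (Q.rnDeriv ℙ ω).toReal ≤ Y ω},
      (Q A).toReal) = min 1 (∫ ω in A, Y ω ∂ℙ) :=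
  stmt_14_general ℙ Y hYpos hYint hEY A hA
end

section
/- Let Λ_i: ℝ → (0,1) be increasing and w_i continuous capacities, i = 1,…,n, and let X be a random variable with ΛᵢVaR^{w_i}(X) ≥ 0 for all i. Then the comonotonic inf-convolution over increasing continuous functions f₁,…,f_n with f₁+⋯+f_n = id and f_i(0) = 0 satisfies: inf{ Σ_{i=1}^n ΛᵢVaR^{w_i}(f_i(X)) } = min_{i=1,…,n} ΛᵢVaR^{w_i}(X), and the infimum is attained by taking f_{i₀} = id for some minimizing index i₀ and f_i = 0 for i ≠ i₀. -/
/-!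
Given a comonotonic allocation `(fᵢ)` and levels `xᵢ` with `wᵢ(fᵢ(X) > xᵢ) ≤ Λᵢ(xᵢ)`, the sets
`{t | xᵢ < fᵢ t}` are upper sets of `ℝ`, hence form a chain; let `{t | x_k < f_k t}` be the largest.
Since `∑ fᵢ = id`, the event `X > ∑ xᵢ` forces some `fᵢ(X) > xᵢ`, hence `f_k(X) > x_k`, so
`w_k(X > ∑ xᵢ) ≤ Λ_k(x_k) ≤ Λ_k(∑ xᵢ)` and `min ΛᵢVaR^{wᵢ}(X) ≤ ∑ xᵢ`. The last step needs `xᵢ ≥ 0`: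
on `t ≤ 0` every `fᵢ t ≤ 0`, so `fᵢ t ≥ t`, and a negative level `xᵢ` would give
`ΛᵢVaR^{wᵢ}(X) ≤ xᵢ < 0`. Conversely, giving all of `X` to a minimizing agent costs exactly the
minimum, because `ΛVaR(0) = 0`.
-/

open Set Filter

/-- Lambda Value-at-Risk of `X` with respect to a capacity `w` and function `Λ`:
`inf {x ∈ ℝ : w(X > x) ≤ Λ(x)}`, valued in the extended reals (`inf ∅ = ⊤`). -/
noncomputable def LVaR {Ω : Type*} (w : Set Ω → ℝ) (Λ : ℝ → ℝ) (X : Ω → ℝ) : EReal :=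
  sInf ((fun x : ℝ => (x : EReal)) '' {x : ℝ | w {ω | x < X ω} ≤ Λ x})

lemma EReal.coe_finsetSum {ι : Type*} (s : Finset ι) (c : ι → ℝ) :
    ((∑ j ∈ s, c j : ℝ) : EReal) = ∑ j ∈ s, (c j : EReal) :=
  map_sum (⟨⟨Real.toEReal, EReal.coe_zero⟩, EReal.coe_add⟩ : ℝ →+ EReal) c s

lemma EReal.le_sum_of_forall_lt_coe {ι : Type*} [Fintype ι] {a : EReal} {L : ι → EReal}
    (hL : ∀ j, 0 ≤ L j) (h : ∀ c : ι → ℝ, (∀ j, L j < c j) → a ≤ ∑ j, (c j : EReal)) :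
    a ≤ ∑ j, L j := by
  refine EReal.le_of_forall_lt_iff_le.1 fun z hz => ?_
  have hfin : ∀ j, L j = (L j).toReal := fun j => by
    have hj : L j ≤ ∑ i, L i := Finset.single_le_sum (fun i _ => hL i) (Finset.mem_univ j)
    exact (EReal.coe_toReal (hj.trans_lt (hz.trans (EReal.coe_lt_top z))).ne
      (ne_bot_of_le_ne_bot EReal.zero_ne_bot (hL j))).symm
  set r : ι → ℝ := fun j => (L j).toReal
  have hrz : ∑ j, r j < z := by
    rw [Finset.sum_congr rfl fun j _ => hfin j, ← EReal.coe_finsetSum] at hz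
    exact_mod_cast hz
  set δ : ℝ := (z - ∑ j, r j) / (Fintype.card ι + 1)
  have hδ : 0 < δ := _root_.div_pos (_root_.sub_pos.2 hrz) (by positivity)
  calc a ≤ ∑ j, ((r j + δ : ℝ) : EReal) :=
        h _ fun j => by rw [hfin j]; exact_mod_cast lt_add_of_pos_right _ hδ
    _ = ((∑ j, r j + Fintype.card ι * δ : ℝ) : EReal) := by
        rw [← EReal.coe_finsetSum, Finset.sum_add_distrib, Finset.sum_const, Finset.card_univ,
          _root_.nsmul_eq_mul]
    _ ≤ z := by
        refine EReal.coe_le_coe_iff.2 ?_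
        have : (Fintype.card ι + 1) * δ = z - ∑ j, r j := by
          simp only [δ]; field_simp
        linarith

section LVaR

variable {Ω : Type*} {w : Set Ω → ℝ} {Λ : ℝ → ℝ} {X : Ω → ℝ}

lemma LVaR_le_coe {x : ℝ} (h : w {ω | x < X ω} ≤ Λ x) : LVaR w Λ X ≤ x :=
  sInf_le ⟨x, h, rfl⟩

lemma le_LVaR {a : EReal} (h : ∀ x : ℝ, w {ω | x < X ω} ≤ Λ x → a ≤ x) : a ≤ LVaR w Λ X :=
  le_sInf <| by rintro _ ⟨x, hx, rfl⟩; exact h x hx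

lemma LVaR_lt_iff {c : EReal} :
    LVaR w Λ X < c ↔ ∃ x : ℝ, w {ω | x < X ω} ≤ Λ x ∧ (x : EReal) < c := by
  simp [LVaR, sInf_lt_iff]

lemma LVaR_const_zero (hw_empty : w ∅ = 0) (hw_univ : w univ = 1)
    (hΛ : ∀ x, Λ x ∈ Ioo (0 : ℝ) 1) : LVaR w Λ (fun _ => 0) = 0 := by
  have hfeas : ∀ x : ℝ, w {_ω : Ω | x < 0} ≤ Λ x ↔ 0 ≤ x := fun x => by
    by_cases hx : x < 0
    · rw [show {_ω : Ω | x < 0} = univ from eq_univ_of_forall fun _ => hx, hw_univ]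
      exact iff_of_false (hΛ x).2.not_ge hx.not_ge
    · rw [show {_ω : Ω | x < 0} = ∅ from eq_empty_of_forall_notMem fun _ => hx, hw_empty]
      exact iff_of_true (hΛ x).1.le (not_lt.1 hx)
  refine IsLeast.csInf_eq ⟨⟨0, (hfeas 0).2 le_rfl, rfl⟩, ?_⟩
  rintro _ ⟨x, hx, rfl⟩
  exact EReal.coe_nonneg.2 ((hfeas x).1 hx)

end LVaR

section Allocation

variable {ι : Type*} [Fintype ι] {f : ι → ℝ → ℝ}

lemma le_apply_of_nonpos (hf_mono : ∀ i, Monotone (f i)) (hf0 : ∀ i, f i 0 = 0)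
    (hsum : ∀ x, ∑ i, f i x = x) (j : ι) {t : ℝ} (ht : t ≤ 0) : t ≤ f j t := by
  classical
  have hrest : ∑ i ∈ Finset.univ.erase j, f i t ≤ 0 :=
    Finset.sum_nonpos fun i _ => hf0 i ▸ hf_mono i ht
  have := Finset.add_sum_erase Finset.univ (fun i => f i t) (Finset.mem_univ j)
  linarith [hsum t]

lemma lt_apply_of_neg_of_lt (hf_mono : ∀ i, Monotone (f i)) (hf0 : ∀ i, f i 0 = 0)
    (hsum : ∀ x, ∑ i, f i x = x) (j : ι) {x t : ℝ} (hx : x < 0) (hxt : x < t) : x < f j t := by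
  rcases le_total t 0 with ht | ht
  · exact hxt.trans_le (le_apply_of_nonpos hf_mono hf0 hsum j ht)
  · exact hx.trans_le (hf0 j ▸ hf_mono j ht)

lemma exists_forall_setOf_lt_apply_subset [Nonempty ι] (hf_mono : ∀ i, Monotone (f i))
    (x : ι → ℝ) : ∃ k, ∀ j, {t | x j < f j t} ⊆ {t | x k < f k t} := by
  let U : ι → UpperSet ℝ := fun j =>
    ⟨{t | x j < f j t}, isUpperSet_setOfPred.2 fun _ _ hab h => h.trans_le (hf_mono j hab)⟩
  obtain ⟨k, hk⟩ := Finite.exists_min U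
  exact ⟨k, fun j => UpperSet.coe_subset_coe.2 (hk j)⟩

end Allocation

section RiskSharing

variable {Ω ι : Type*} [Fintype ι] {w : ι → Set Ω → ℝ} {Λ : ι → ℝ → ℝ} {X : Ω → ℝ}
  {f : ι → ℝ → ℝ}

lemma nonneg_of_LVaR_nonneg {j : ι} (hw_mono : ∀ A B : Set Ω, A ⊆ B → w j A ≤ w j B)
    (hpos : 0 ≤ LVaR (w j) (Λ j) X) (hf_mono : ∀ i, Monotone (f i)) (hf0 : ∀ i, f i 0 = 0)
    (hsum : ∀ x, ∑ i, f i x = x) {x : ℝ} (hx : w j {ω | x < f j (X ω)} ≤ Λ j x) : 0 ≤ x := by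
  by_contra! hneg
  have hsub : {ω | x < X ω} ⊆ {ω | x < f j (X ω)} := fun ω hω =>
    lt_apply_of_neg_of_lt hf_mono hf0 hsum j hneg hω
  have := hpos.trans (LVaR_le_coe ((hw_mono _ _ hsub).trans hx))
  exact hneg.not_ge (EReal.coe_nonneg.1 this)

lemma iInf_LVaR_le_sum_of_feasible [Nonempty ι]
    (hw_mono : ∀ i, ∀ A B : Set Ω, A ⊆ B → w i A ≤ w i B) (hΛ_mono : ∀ i, Monotone (Λ i))
    (hpos : ∀ i, 0 ≤ LVaR (w i) (Λ i) X) (hf_mono : ∀ i, Monotone (f i))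
    (hf0 : ∀ i, f i 0 = 0) (hsum : ∀ x, ∑ i, f i x = x)
    (x : ι → ℝ) (hx : ∀ j, w j {ω | x j < f j (X ω)} ≤ Λ j (x j)) :
    ⨅ i, LVaR (w i) (Λ i) X ≤ ((∑ j, x j : ℝ) : EReal) := by
  obtain ⟨k, hk⟩ := exists_forall_setOf_lt_apply_subset hf_mono x
  have hsub : {ω | ∑ j, x j < X ω} ⊆ {ω | x k < f k (X ω)} := fun ω hω => by
    rw [mem_ofPred_eq, ← hsum (X ω)] at hω
    obtain ⟨j, -, hj⟩ := Finset.exists_lt_of_sum_lt hω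
    exact hk j hj
  have hxk : x k ≤ ∑ j, x j := Finset.single_le_sum
    (fun j _ => nonneg_of_LVaR_nonneg (hw_mono j) (hpos j) hf_mono hf0 hsum (hx j))
    (Finset.mem_univ k)
  exact (iInf_le _ k).trans
    (LVaR_le_coe (((hw_mono k _ _ hsub).trans (hx k)).trans (hΛ_mono k hxk)))

lemma iInf_LVaR_le_sum_LVaR [Nonempty ι]
    (hw_mono : ∀ i, ∀ A B : Set Ω, A ⊆ B → w i A ≤ w i B) (hΛ_mono : ∀ i, Monotone (Λ i))
    (hpos : ∀ i, 0 ≤ LVaR (w i) (Λ i) X) (hf_mono : ∀ i, Monotone (f i))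
    (hf0 : ∀ i, f i 0 = 0) (hsum : ∀ x, ∑ i, f i x = x) :
    ⨅ i, LVaR (w i) (Λ i) X ≤ ∑ i, LVaR (w i) (Λ i) (fun ω => f i (X ω)) := by
  refine EReal.le_sum_of_forall_lt_coe (fun j => le_LVaR fun x hx => EReal.coe_nonneg.2
    (nonneg_of_LVaR_nonneg (hw_mono j) (hpos j) hf_mono hf0 hsum hx)) fun c hc => ?_
  choose x hx hxc using fun j => LVaR_lt_iff.1 (hc j)
  calc ⨅ i, LVaR (w i) (Λ i) X ≤ ((∑ j, x j : ℝ) : EReal) :=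
        iInf_LVaR_le_sum_of_feasible hw_mono hΛ_mono hpos hf_mono hf0 hsum x hx
    _ ≤ ∑ j, (c j : EReal) := by
        rw [EReal.coe_finsetSum]
        exact Finset.sum_le_sum fun j _ => (hxc j).le

end RiskSharing

theorem stmt_19_general {Ω : Type*} (n : ℕ) (hn : 0 < n)
    (w : Fin n → Set Ω → ℝ) (Λ : Fin n → ℝ → ℝ)
    (hw_mono : ∀ i, ∀ A B : Set Ω, A ⊆ B → w i A ≤ w i B)
    (hw_empty : ∀ i, w i (∅ : Set Ω) = 0) (hw_univ : ∀ i, w i (univ : Set Ω) = 1)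
    (hΛ_mono : ∀ i, Monotone (Λ i)) (hΛ_range : ∀ i x, Λ i x ∈ Ioo (0 : ℝ) 1)
    (X : Ω → ℝ) (hpos : ∀ i, (0 : EReal) ≤ LVaR (w i) (Λ i) X) :
    (sInf {s : EReal | ∃ f : Fin n → ℝ → ℝ,
        (∀ i, Monotone (f i)) ∧ (∀ i, Continuous (f i)) ∧ (∀ i, f i 0 = 0) ∧
        (∀ x : ℝ, ∑ i, f i x = x) ∧
        s = ∑ i, LVaR (w i) (Λ i) (fun ω => f i (X ω))} =
      ⨅ i, LVaR (w i) (Λ i) X) ∧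
    ∃ i₀ : Fin n,
      LVaR (w i₀) (Λ i₀) X = (⨅ i, LVaR (w i) (Λ i) X) ∧
      (∑ i, LVaR (w i) (Λ i) (fun ω => if i = i₀ then X ω else 0)) =
        ⨅ i, LVaR (w i) (Λ i) X := by
  have : Nonempty (Fin n) := ⟨⟨0, hn⟩⟩
  obtain ⟨i₀, hi₀⟩ := Finite.exists_min fun i => LVaR (w i) (Λ i) X
  have hmin : LVaR (w i₀) (Λ i₀) X = ⨅ i, LVaR (w i) (Λ i) X :=
    le_antisymm (le_iInf hi₀) (iInf_le _ i₀)
  have hsingle : (∑ i, LVaR (w i) (Λ i) (fun ω => if i = i₀ then X ω else 0)) =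
      ⨅ i, LVaR (w i) (Λ i) X := by
    rw [Finset.sum_eq_single i₀ (fun i _ hi => by
      simpa [hi] using LVaR_const_zero (hw_empty i) (hw_univ i) (hΛ_range i)) (by simp)]
    simpa using hmin
  refine ⟨le_antisymm (sInf_le ⟨fun i x => if i = i₀ then x else 0, ?_, ?_, by simp, by simp,
    hsingle.symm⟩) (le_sInf ?_), i₀, hmin, hsingle⟩
  · intro i
    by_cases h : i = i₀
    · simp only [h, if_true]
      exact monotone_id
    · simpa [h] using monotone_const
  · exact fun i => continuous_if_const _ (fun _ => continuous_id) fun _ => continuous_const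
  · rintro _ ⟨f, hf_mono, -, hf0, hsum, rfl⟩
    exact iInf_LVaR_le_sum_LVaR hw_mono hΛ_mono hpos hf_mono hf0 hsum

/-- Comonotonic risk sharing for `ΛᵢVaR^{wᵢ}` with increasing `Λᵢ` and continuous
capacities `wᵢ`, when all `ΛᵢVaR^{wᵢ}(X) ≥ 0`: the comonotonic inf-convolution equals
`minᵢ ΛᵢVaR^{wᵢ}(X)` and is attained by giving the whole risk to a minimizing agent. -/
theorem stmt_19 {Ω : Type*} (n : ℕ) (hn : 0 < n)
    (w : Fin n → Set Ω → ℝ) (Λ : Fin n → ℝ → ℝ)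
    (hw_mono : ∀ i, ∀ A B : Set Ω, A ⊆ B → w i A ≤ w i B)
    (hw_empty : ∀ i, w i (∅ : Set Ω) = 0) (hw_univ : ∀ i, w i (univ : Set Ω) = 1)
    (hw_cont : ∀ i, ∀ A : ℕ → Set Ω, (∀ k, A (k + 1) ⊆ A k) → (⋂ k, A k) = ∅ →
      Tendsto (fun k => w i (A k)) atTop (nhds 0))
    (hΛ_mono : ∀ i, Monotone (Λ i)) (hΛ_range : ∀ i x, Λ i x ∈ Ioo (0 : ℝ) 1)
    (X : Ω → ℝ) (hpos : ∀ i, (0 : EReal) ≤ LVaR (w i) (Λ i) X) :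
    (sInf {s : EReal | ∃ f : Fin n → ℝ → ℝ,
        (∀ i, Monotone (f i)) ∧ (∀ i, Continuous (f i)) ∧ (∀ i, f i 0 = 0) ∧
        (∀ x : ℝ, ∑ i, f i x = x) ∧
        s = ∑ i, LVaR (w i) (Λ i) (fun ω => f i (X ω))} =
      ⨅ i, LVaR (w i) (Λ i) X) ∧
    ∃ i₀ : Fin n,
      LVaR (w i₀) (Λ i₀) X = (⨅ i, LVaR (w i) (Λ i) X) ∧
      (∑ i, LVaR (w i) (Λ i) (fun ω => if i = i₀ then X ω else 0)) =
        ⨅ i, LVaR (w i) (Λ i) X :=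
  stmt_19_general n hn w Λ hw_mono hw_empty hw_univ hΛ_mono hΛ_range X hpos
end
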